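/- Let d ≥ 2 and α ≥ 2 be integers. Let e¹ ∈ (ℤ_d)^α be the vector with 1 in the first coordinate and 0 elsewhere, and let z_α ∈ Sym_α be the cycle (1,2,…,α) if α is odd and (2,3,…,α) if α is even. Then the two elements (e¹; z_α) and (e¹; (1,2)) generate the generalized symmetric group ℤ_d ≀ Sym_α. -/

import Mathlib

/-- A permutation of coordinates, as a multiplicative automorphism of
`(ℤ_d)^α` (written multiplicatively): `(w^π)_i = w_{π⁻¹(i)}`. -/
def permCoordAut (α : ℕ) (M : Type*) [Monoid M] (π : Equiv.Perm (Fin α)) :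
    MulAut (Fin α → M) :=
  { Equiv.arrowCongr π (Equiv.refl M) with
    map_mul' := fun _ _ => rfl }

/-- The action of `Sym_α` on `(ℤ_d)^α` permuting the coordinates. -/
def wreathAct (d α : ℕ) : Equiv.Perm (Fin α) →* MulAut (Fin α → Multiplicative (ZMod d)) where
  toFun := permCoordAut α (Multiplicative (ZMod d))
  map_one' := by ext v; rfl
  map_mul' := fun π ρ => by ext v; rfl

/-- The generalized symmetric group `ℤ_d ≀ Sym_α = (ℤ_d)^α ⋊ Sym_α`, where
`Sym_α` acts by permuting coordinates. -/
abbrev GenSym (d α : ℕ) :=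
  SemidirectProduct (Fin α → Multiplicative (ZMod d)) (Equiv.Perm (Fin α)) (wreathAct d α)

/-- The permutation `z_α ∈ Sym_α`: the cycle `(1,2,…,α)` if `α` is odd, and the
cycle `(2,3,…,α)` if `α` is even (here in 0-based notation on `Fin α`:
`finRotate α` is the full cycle, and `Equiv.swap 0 1 * finRotate α` is the
cycle moving every point except the first). -/
def zcycle : (α : ℕ) → Equiv.Perm (Fin α)
  | 0 => 1
  | 1 => 1
  | (m + 2) =>
    if Odd (m + 2) then finRotate (m + 2)
    else Equiv.swap 0 1 * finRotate (m + 2)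

/-!
Let `H` be generated by `a = (e¹; z_α)` and `b = (e¹; (1,2))`. It maps onto `Sym_α`, since
`z_α` or `(1,2) z_α` is the full cycle `(1,2,…,α)`. Hence `K = H ∩ (ℤ_d)^α` is stable under
permuting coordinates. It contains `b² = e¹ + e²`, hence every `eⁱ + eʲ` with `i ≠ j`, and for
`α ≥ 3` also every `2eⁱ`; so modulo `K` all `eⁱ` are congruent to `e¹`, which has order `2`.
The parity-dependent choice of `z_α` makes it a cycle of odd length, so `a ^ orderOf z_α` is a
sum of an odd number of `eⁱ` lying in `K`, and therefore `e¹ ∈ K`. Its coordinate permutations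
generate `(ℤ_d)^α`, so `H` is everything. For `α = 2`, `z_α = 1` and `a = e¹` directly.
-/

open Equiv Finset Fin.NatCast

namespace SemidirectProduct

variable {N G : Type*} [Group G]

theorem eq_top_of_map_rightHom_eq_top [Group N] {φ : G →* MulAut N}
    {H : Subgroup (N ⋊[φ] G)} (hH : H.map rightHom = ⊤) (hN : ∀ n, inl n ∈ H) : H = ⊤ := by
  refine eq_top_iff.mpr fun x _ => ?_
  obtain ⟨h, hh, hx⟩ : x.right ∈ H.map rightHom := hH ▸ Subgroup.mem_top _
  have : x = inl (x.left * h.left⁻¹) * h := by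
    ext <;> simp [← hx]
  exact this ▸ H.mul_mem (hN _) hh

variable [CommGroup N] {φ : G →* MulAut N}

theorem mk_pow (n : N) (g : G) (k : ℕ) :
    (⟨n, g⟩ : N ⋊[φ] G) ^ k = ⟨∏ i ∈ range k, φ (g ^ i) n, g ^ k⟩ := by
  induction k with
  | zero => ext <;> simp
  | succ k ih =>
    rw [pow_succ', ih, mul_def, prod_range_succ', pow_zero, map_one, MulAut.one_apply,
      map_prod, mul_comm, pow_succ']
    simp only [← MulAut.mul_apply, ← map_mul, ← pow_succ']

theorem inl_apply_mem_of_map_rightHom_eq_top {H : Subgroup (N ⋊[φ] G)}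
    (hH : H.map rightHom = ⊤) {n : N} (hn : inl n ∈ H) (g : G) : inl (φ g n) ∈ H := by
  obtain ⟨h, hh, rfl⟩ : g ∈ H.map rightHom := hH ▸ Subgroup.mem_top g
  have hconj : h * inl n * h⁻¹ = inl (φ h.right n) := by
    ext <;> simp [mul_comm]
  exact hconj ▸ H.mul_mem (H.mul_mem hh hn) (H.inv_mem hh)

end SemidirectProduct

theorem Subgroup.pow_two_mem_of_mul_mem {G : Type*} [CommGroup G] {K : Subgroup G} {a b c : G}
    (hab : a * b ∈ K) (hbc : b * c ∈ K) (hca : c * a ∈ K) : a ^ 2 ∈ K := by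
  have : a ^ 2 = a * b * (b * c)⁻¹ * (c * a) := by
    simp [sq, mul_comm, mul_left_comm, mul_assoc]
  exact this ▸ K.mul_mem (K.mul_mem hab (K.inv_mem hbc)) hca

theorem Subgroup.mem_of_prod_mem_of_mul_mem {G ι : Type*} [CommGroup G] {K : Subgroup G}
    {s : Finset ι} {f : ι → G} {a : G} (hs : Odd #s) (hsq : a ^ 2 ∈ K)
    (hf : ∀ i ∈ s, a * f i ∈ K) (hprod : ∏ i ∈ s, f i ∈ K) : a ∈ K := by
  have hpow : a ^ #s ∈ K := by
    have := K.prod_mem hf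
    rwa [prod_mul_distrib, prod_const, K.mul_mem_cancel_right hprod] at this
  obtain ⟨t, ht⟩ := hs
  have : a = a ^ #s * ((a ^ 2) ^ t)⁻¹ := by rw [ht]; group
  exact this ▸ K.mul_mem hpow (K.inv_mem (K.pow_mem hsq t))

theorem Equiv.Perm.exists_apply_eq_and_apply_eq {α : Type*} [DecidableEq α] {a b i j : α}
    (hab : a ≠ b) (hij : i ≠ j) : ∃ π : Perm α, π a = i ∧ π b = j := by
  refine ⟨swap a i * swap b (swap a i j), ?_, by simp⟩
  have ha : a ≠ swap a i j := fun h => hij (by simpa using congrArg (swap a i) h)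
  simp [swap_apply_of_ne_of_ne hab ha]

section CoordinatePermutation

variable {M : Type*} [CommGroup M] {n : ℕ}

theorem permCoordAut_mulSingle (π : Perm (Fin n)) (i : Fin n) (x : M) :
    permCoordAut n M π (Pi.mulSingle i x) = Pi.mulSingle (π i) x := by
  funext j
  change (Pi.mulSingle i x : Fin n → M) (π.symm j) = _
  simp [Pi.mulSingle_apply, symm_apply_eq]

theorem wreathAct_mulSingle {d : ℕ} (π : Perm (Fin n)) (i : Fin n)
    (y : Multiplicative (ZMod d)) :
    wreathAct d n π (Pi.mulSingle i y) = Pi.mulSingle (π i) y :=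
  permCoordAut_mulSingle π i y

variable {K : Subgroup (Fin n → M)}

theorem mulSingle_mul_mulSingle_mem (hK : ∀ π, ∀ v ∈ K, permCoordAut n M π v ∈ K)
    {a b i j : Fin n} {x : M} (hab : a ≠ b) (hij : i ≠ j)
    (h : Pi.mulSingle a x * Pi.mulSingle b x ∈ K) :
    Pi.mulSingle i x * Pi.mulSingle j x ∈ K := by
  obtain ⟨π, rfl, rfl⟩ := Perm.exists_apply_eq_and_apply_eq hab hij
  simpa [permCoordAut_mulSingle] using hK π _ h

theorem mulSingle_mem_of_prod_mem (hK : ∀ π, ∀ v ∈ K, permCoordAut n M π v ∈ K)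
    {ι : Type*} {i j k : Fin n} {x : M} (hij : i ≠ j) (hjk : j ≠ k) (hki : k ≠ i)
    (hpair : Pi.mulSingle i x * Pi.mulSingle j x ∈ K)
    {s : Finset ι} (hs : Odd #s) (f : ι → Fin n)
    (hprod : ∏ l ∈ s, Pi.mulSingle (f l) x ∈ K) : Pi.mulSingle i x ∈ K := by
  have hpairs {a b : Fin n} (hab : a ≠ b) := mulSingle_mul_mulSingle_mem hK hij hab hpair
  have hsq := Subgroup.pow_two_mem_of_mul_mem (hpairs hij) (hpairs hjk) (hpairs hki)
  refine Subgroup.mem_of_prod_mem_of_mul_mem hs hsq (fun l _ => ?_) hprod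
  by_cases hl : f l = i
  · rwa [hl, ← sq]
  · exact hpairs (Ne.symm hl)

theorem eq_top_of_mulSingle_mem (hK : ∀ π, ∀ v ∈ K, permCoordAut n M π v ∈ K) {g : M}
    (hg : ∀ y, y ∈ Subgroup.zpowers g) {i : Fin n} (hi : Pi.mulSingle i g ∈ K) : K = ⊤ := by
  refine eq_top_iff.mpr fun v _ => Subgroup.pi_mem_of_mulSingle_mem v fun j => ?_
  obtain ⟨k, hk⟩ := Subgroup.mem_zpowers_iff.mp (hg (v j))
  have hj : Pi.mulSingle j g ∈ K := by
    simpa [permCoordAut_mulSingle] using hK (swap i j) _ hi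
  simpa [← hk, Pi.mulSingle_zpow] using K.zpow_mem hj k

end CoordinatePermutation

theorem finRotate_pow_apply {n : ℕ} (k : ℕ) (i : Fin (n + 1)) :
    (finRotate (n + 1) ^ k) i = i + (k : Fin (n + 1)) := by
  induction k with
  | zero => simp
  | succ k ih => rw [pow_succ', Perm.mul_apply, ih, finRotate_apply, Nat.cast_succ, add_assoc]

theorem finRotate_pow_self (n : ℕ) : finRotate (n + 1) ^ (n + 1) = 1 := by
  ext i
  simp [finRotate_pow_apply]

theorem swap_zero_one_mul_finRotate_apply_succ {n : ℕ} (i : Fin (n + 1)) :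
    (swap 0 1 * finRotate (n + 2) : Perm (Fin (n + 2))) i.succ = (finRotate (n + 1) i).succ := by
  rw [finRotate_succ_eq_decomposeFin, Perm.mul_apply, Perm.decomposeFin_symm_apply_succ,
    swap_apply_self]

theorem swap_zero_one_mul_finRotate_pow_succ (n : ℕ) :
    (swap 0 1 * finRotate (n + 2) : Perm (Fin (n + 2))) ^ (n + 1) = 1 := by
  have hsemiconj : Function.Semiconj Fin.succ (finRotate (n + 1))
      (swap 0 1 * finRotate (n + 2) : Perm (Fin (n + 2))) :=
    fun i => (swap_zero_one_mul_finRotate_apply_succ i).symm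
  ext i
  refine Fin.cases ?_ (fun i => ?_) i
  · refine congrArg Fin.val (Perm.pow_apply_eq_self_of_apply_eq_self ?_ _)
    simp [finRotate_apply]
  · have := hsemiconj.iterate_right (n + 1) i
    simp only [← Perm.coe_pow, finRotate_pow_self] at this
    simp [← this]

theorem odd_orderOf_zcycle (m : ℕ) : Odd (orderOf (zcycle (m + 2))) := by
  by_cases h : Odd (m + 2)
  · rw [zcycle, if_pos h]
    exact h.of_dvd_nat (orderOf_dvd_of_pow_eq_one (finRotate_pow_self (m + 1)))
  · rw [zcycle, if_neg h]
    have hodd : Odd (m + 1) := by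
      rcases Nat.even_or_odd m with hm | hm
      · exact hm.add_one
      · exact absurd (hm.add_odd odd_one |>.add_one) h
    exact hodd.of_dvd_nat (orderOf_dvd_of_pow_eq_one (swap_zero_one_mul_finRotate_pow_succ m))

theorem closure_zcycle_swap (m : ℕ) :
    Subgroup.closure {zcycle (m + 2), swap 0 1} = ⊤ := by
  set C := Subgroup.closure {zcycle (m + 2), swap (0 : Fin (m + 2)) 1}
  have hz : zcycle (m + 2) ∈ C := Subgroup.subset_closure (by simp)
  have hs : swap 0 1 ∈ C := Subgroup.subset_closure (by simp)
  have hr : finRotate (m + 2) ∈ C := by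
    by_cases h : Odd (m + 2)
    · rwa [zcycle, if_pos h] at hz
    · rw [zcycle, if_neg h] at hz
      simpa [← mul_assoc] using C.mul_mem hs hz
  have := Perm.closure_cycle_adjacent_swap (σ := finRotate (m + 2)) isCycle_finRotate
    support_finRotate 0
  rw [finRotate_apply, zero_add] at this
  rw [eq_top_iff, ← this, Subgroup.closure_le]
  exact Set.insert_subset hr (Set.singleton_subset_iff.mpr hs)

theorem ZMod.mem_zpowers_ofAdd_one {d : ℕ} (y : Multiplicative (ZMod d)) :
    y ∈ Subgroup.zpowers (Multiplicative.ofAdd 1) :=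
  Subgroup.mem_zpowers_iff.mpr ⟨(Multiplicative.toAdd y).cast, by simp [← ofAdd_zsmul]⟩

section GenSym

variable {d m : ℕ} {H : Subgroup (GenSym d (m + 2))}

theorem map_rightHom_eq_top_of_mem {v w : Fin (m + 2) → Multiplicative (ZMod d)}
    (hA : ⟨v, zcycle (m + 2)⟩ ∈ H) (hB : ⟨w, swap 0 1⟩ ∈ H) :
    H.map SemidirectProduct.rightHom = ⊤ := by
  rw [eq_top_iff, ← closure_zcycle_swap m, Subgroup.closure_le]
  exact Set.insert_subset ⟨_, hA, rfl⟩ (Set.singleton_subset_iff.mpr ⟨_, hB, rfl⟩)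

theorem inl_mulSingle_zero_mem {x : Multiplicative (ZMod d)}
    (hA : ⟨Pi.mulSingle 0 x, zcycle (m + 2)⟩ ∈ H) (hB : ⟨Pi.mulSingle 0 x, swap 0 1⟩ ∈ H) :
    SemidirectProduct.inl (Pi.mulSingle 0 x) ∈ H := by
  rcases m with _ | m
  · have : zcycle 2 = 1 := by decide
    simpa [this] using hA
  have hpair : SemidirectProduct.inl (Pi.mulSingle 0 x * Pi.mulSingle 1 x) ∈ H := by
    have := H.mul_mem hB hB
    rwa [SemidirectProduct.mul_def, wreathAct_mulSingle, swap_apply_left, swap_mul_self] at this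
  have hpow := H.pow_mem hA (orderOf (zcycle (m + 1 + 2)))
  rw [SemidirectProduct.mk_pow, pow_orderOf_eq_one] at hpow
  simp only [wreathAct_mulSingle] at hpow
  have hH := map_rightHom_eq_top_of_mem hA hB
  exact mulSingle_mem_of_prod_mem (K := H.comap SemidirectProduct.inl)
    (fun π _ hv => SemidirectProduct.inl_apply_mem_of_map_rightHom_eq_top hH hv π)
    (j := 1) (k := ⟨2, by omega⟩) (by simp) (by simp [Fin.ext_iff]) (by simp [Fin.ext_iff])
    hpair (by rw [card_range]; exact odd_orderOf_zcycle (m + 1)) _ hpow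

end GenSym

/-- Let d ≥ 2 and α ≥ 2.  The two elements `(e¹; z_α)` and `(e¹; (1,2))`
generate the generalized symmetric group `ℤ_d ≀ Sym_α`, where `e¹ ∈ (ℤ_d)^α`
has 1 in the first coordinate and 0 elsewhere. -/
theorem genSym_generated_by_two (d α : ℕ) (hα : 2 ≤ α) :
    Subgroup.closure
      ({⟨fun i => if i = ⟨0, by omega⟩ then Multiplicative.ofAdd (1 : ZMod d) else 1,
          zcycle α⟩,
        ⟨fun i => if i = ⟨0, by omega⟩ then Multiplicative.ofAdd (1 : ZMod d) else 1,
          Equiv.swap ⟨0, by omega⟩ ⟨1, by omega⟩⟩} : Set (GenSym d α)) = ⊤ := by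
  obtain ⟨m, rfl⟩ : ∃ m, α = m + 2 := ⟨α - 2, by omega⟩
  set x := Multiplicative.ofAdd (1 : ZMod d)
  have he : (fun i : Fin (m + 2) => if i = ⟨0, by omega⟩ then x else 1) = Pi.mulSingle 0 x := by
    funext i
    rw [Pi.mulSingle_apply, Fin.mk_zero]
  rw [he, Fin.mk_zero, Fin.mk_one]
  set H := Subgroup.closure
    ({⟨Pi.mulSingle 0 x, zcycle (m + 2)⟩, ⟨Pi.mulSingle 0 x, swap 0 1⟩} : Set (GenSym d (m + 2)))
  have hA : ⟨Pi.mulSingle 0 x, zcycle (m + 2)⟩ ∈ H := Subgroup.subset_closure (by simp)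
  have hB : ⟨Pi.mulSingle 0 x, swap 0 1⟩ ∈ H := Subgroup.subset_closure (by simp)
  have hH := map_rightHom_eq_top_of_mem hA hB
  have hbase : H.comap SemidirectProduct.inl = ⊤ :=
    eq_top_of_mulSingle_mem
      (fun π _ hv => SemidirectProduct.inl_apply_mem_of_map_rightHom_eq_top hH hv π)
      ZMod.mem_zpowers_ofAdd_one (inl_mulSingle_zero_mem hA hB)
  exact SemidirectProduct.eq_top_of_map_rightHom_eq_top hH
    ((Subgroup.eq_top_iff' _).mp hbase)
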